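/- Let a ∈ ℕ^N with a₁+⋯+a_N ≤ D, D ∈ ℕ, k ≥ 1, and j ∈ {1,…,N}. Under the substitution y = φ_j(x) (with φ_j as in the orthant decomposition), one has ∫_{E_j} x^{a/k} max(1, x₁,…,x_N)^{-D/k} (1+Σᵢxᵢ)^{-(N+1)} dx = ∫_E y^{b/k} (1+Σᵢyᵢ)^{-(N+1)} dy, where b ∈ ℕ^N is defined by b_l = a_l for l ≠ j and b_j = D − Σ_{l} a_l; in particular b has nonnegative integer entries. -/

import Mathlib

open MeasureTheory
open Matrix

/-- The change-of-variables identity for the inversion `φ_j` on the orthant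
piece `E_j = {x : xᵢ > 0, x_j ≥ 1, x_l ≤ x_j}`: for `a ∈ ℕ^N` with
`∑ a_l ≤ D` and `k ≥ 1`,
`∫_{E_j} x^{a/k} max(1,x₁,…,x_N)^{-D/k} (1+∑xᵢ)^{-(N+1)} dx
  = ∫_E y^{b/k} (1+∑yᵢ)^{-(N+1)} dy`,
where `E` is the (positive) unit cube and `b_l = a_l` for `l ≠ j`,
`b_j = D − ∑_l a_l`; in particular `b` has nonnegative integer entries. -/
theorem stmt_15 (N D k : ℕ) (hN : 1 ≤ N) (hk : 1 ≤ k)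
    (a : Fin N → ℕ) (ha : ∑ l, a l ≤ D) (j : Fin N) :
    (∫ x in {x : Fin N → ℝ | (∀ l, 0 < x l) ∧ 1 ≤ x j ∧ ∀ l, x l ≤ x j},
        (∏ l, x l ^ ((a l : ℝ) / k)) * (max 1 (⨆ l, x l)) ^ (-(D : ℝ) / k) *
          ((1 + ∑ l, x l) ^ (N + 1))⁻¹) =
      ∫ y in {y : Fin N → ℝ | (∀ l, 0 < y l) ∧ ∀ l, y l ≤ 1},
        (∏ l, y l ^ (((if l = j then D - ∑ l', a l' else a l : ℕ) : ℝ) / k)) *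
          ((1 + ∑ l, y l) ^ (N + 1))⁻¹ := by
  classical
  have hNe : Nonempty (Fin N) := ⟨j⟩
  have hk0 : (k : ℝ) ≠ 0 := Nat.cast_ne_zero.2 (by omega)
  set T : Set (Fin N → ℝ) := {y : Fin N → ℝ | (∀ l, 0 < y l) ∧ ∀ l, y l ≤ 1} with hTdef
  set S : Set (Fin N → ℝ) := {x : Fin N → ℝ | (∀ l, 0 < x l) ∧ 1 ≤ x j ∧ ∀ l, x l ≤ x j}
    with hSdef
  set f : (Fin N → ℝ) → (Fin N → ℝ) :=
    fun y l => if l = j then (y j)⁻¹ else y l * (y j)⁻¹ with hfdef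
  set A : (Fin N → ℝ) → (Fin N → ℝ) →L[ℝ] (Fin N → ℝ) := fun y =>
    ContinuousLinearMap.pi (fun l =>
      if l = j then (-((y j) ^ 2)⁻¹) • ContinuousLinearMap.proj j
      else y l • ((-((y j) ^ 2)⁻¹) • ContinuousLinearMap.proj j)
        + (y j)⁻¹ • ContinuousLinearMap.proj l) with hAdef
  -- measurability of T
  have hT : MeasurableSet T := by
    have : T = (⋂ l, {y : Fin N → ℝ | 0 < y l}) ∩ ⋂ l, {y : Fin N → ℝ | y l ≤ 1} := by
      ext y
      simp [hTdef, Set.mem_iInter, forall_and]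
    rw [this]
    exact (MeasurableSet.iInter fun l =>
        measurableSet_lt measurable_const (measurable_pi_apply l)).inter
      (MeasurableSet.iInter fun l => measurableSet_le (measurable_pi_apply l) measurable_const)
  -- derivative
  have hderiv : ∀ y ∈ T, HasFDerivWithinAt f (A y) T y := by
    intro y hy
    have ht : (0:ℝ) < y j := hy.1 j
    have hF : HasFDerivAt f (A y) y := by
      apply hasFDerivAt_pi''
      intro l
      rw [hAdef, ContinuousLinearMap.proj_pi]
      by_cases hl : l = j
      · subst hl
        simp only [hfdef, if_pos rfl]
        exact (hasDerivAt_inv ht.ne').comp_hasFDerivAt y (hasFDerivAt_apply l y)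
      · simp only [hfdef, if_neg hl]
        exact (hasFDerivAt_apply l y).mul
          ((hasDerivAt_inv ht.ne').comp_hasFDerivAt y (hasFDerivAt_apply j y))
    exact hF.hasFDerivWithinAt
  -- determinant
  have hdet : ∀ y : Fin N → ℝ, 0 < y j → (A y).det = -((y j ^ (N + 1))⁻¹) := by
    intro y ht
    set t := y j with htdef
    set w : Fin N → ℝ := fun l => if l = j then -t⁻¹ - 1 else -(y l) * t⁻¹ with hw
    set M : Matrix (Fin N) (Fin N) ℝ :=
      t⁻¹ • (1 + Matrix.replicateCol Unit w * Matrix.replicateRow Unit (Pi.single j (1:ℝ))) with hM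
    have hlin : (↑(A y) : (Fin N → ℝ) →ₗ[ℝ] (Fin N → ℝ)) = Matrix.toLin' M := by
      apply LinearMap.ext
      intro v
      funext l
      have hMv : M.mulVec v l = t⁻¹ * v l + t⁻¹ * w l * v j := by
        simp only [hM, Matrix.mulVec, dotProduct, Matrix.smul_apply, Matrix.add_apply,
          Matrix.one_apply, Matrix.mul_apply, Matrix.replicateCol_apply, Matrix.replicateRow_apply,
          Finset.univ_unique, Finset.sum_singleton, Pi.single_apply, smul_eq_mul,
          mul_add, add_mul, mul_ite, ite_mul, mul_one, mul_zero, zero_mul, one_mul,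
          Finset.sum_add_distrib, Finset.sum_ite_eq', Finset.sum_ite_eq, Finset.mem_univ,
          if_true]
      rw [Matrix.toLin'_apply, hMv]
      simp only [hAdef, ContinuousLinearMap.coe_coe, ContinuousLinearMap.pi_apply]
      by_cases hl : l = j
      · subst hl
        simp only [if_pos rfl, eq_self_iff_true, if_true, ← htdef, hw, ContinuousLinearMap.smul_apply,
          ContinuousLinearMap.proj_apply, smul_eq_mul]
        have : t ≠ 0 := ht.ne'
        field_simp
        ring
      · simp only [if_neg hl, ← htdef, hw, ContinuousLinearMap.add_apply, ContinuousLinearMap.smul_apply,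
          ContinuousLinearMap.proj_apply, smul_eq_mul]
        have : t ≠ 0 := ht.ne'
        field_simp
        ring
    have hAd : (A y).det = M.det := by
      rw [ContinuousLinearMap.det, hlin, LinearMap.det_toLin']
    rw [hAd, hM, Matrix.det_smul, Matrix.det_one_add_replicateCol_mul_replicateRow]
    have hdot : Pi.single j (1:ℝ) ⬝ᵥ w = w j := by
      simp [dotProduct, Pi.single_apply]
    rw [hdot, hw]
    simp only [if_pos rfl, eq_self_iff_true, if_true]
    have htne : t ≠ 0 := ht.ne'
    rw [Fintype.card_fin]
    field_simp
    rw [div_pow, one_pow]; field_simp; ring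
  -- injectivity
  have hinj : Set.InjOn f T := by
    intro y hy z hz hyz
    have hj : y j = z j := by
      have := congrFun hyz j
      simpa [hfdef] using inv_injective (by simpa [hfdef] using this)
    funext l
    by_cases hl : l = j
    · rw [hl, hj]
    · have := congrFun hyz l
      simp only [hfdef, if_neg hl] at this
      have hz0 : (z j)⁻¹ ≠ 0 := inv_ne_zero (hz.1 j).ne'
      rw [hj] at this
      exact mul_right_cancel₀ hz0 this
  -- image
  have himg : f '' T = S := by
    ext x
    constructor
    · rintro ⟨y, hy, rfl⟩
      have ht : (0:ℝ) < y j := hy.1 j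
      have ht1 : y j ≤ 1 := hy.2 j
      have hinv : (1:ℝ) ≤ (y j)⁻¹ := (one_le_inv₀ ht).2 ht1
      refine ⟨fun l => ?_, ?_, fun l => ?_⟩
      · by_cases hl : l = j
        · simpa [hfdef, hl] using inv_pos.2 ht
        · simp only [hfdef, if_neg hl]
          exact mul_pos (hy.1 l) (inv_pos.2 ht)
      · simpa [hfdef] using hinv
      · by_cases hl : l = j
        · simp [hfdef, hl]
        · simp only [hfdef, if_neg hl, if_pos rfl]
          have : y l * (y j)⁻¹ ≤ 1 * (y j)⁻¹ :=
            mul_le_mul_of_nonneg_right (hy.2 l) (inv_nonneg.2 ht.le)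
          simpa using this
    · rintro ⟨hx0, hx1, hxle⟩
      have hxj : (0:ℝ) < x j := hx0 j
      refine ⟨fun l => if l = j then (x j)⁻¹ else x l * (x j)⁻¹, ⟨fun l => ?_, fun l => ?_⟩, ?_⟩
      · by_cases hl : l = j
        · simp [hl, inv_pos.2 hxj]
        · simp only [if_neg hl]
          exact mul_pos (hx0 l) (inv_pos.2 hxj)
      · by_cases hl : l = j
        · simp only [hl, if_pos rfl]
          exact inv_le_one_of_one_le₀ hx1
        · simp only [if_neg hl]
          calc x l * (x j)⁻¹ ≤ x j * (x j)⁻¹ :=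
                mul_le_mul_of_nonneg_right (hxle l) (inv_nonneg.2 hxj.le)
            _ = 1 := mul_inv_cancel₀ hxj.ne'
      · funext l
        by_cases hl : l = j
        · simp [hfdef, hl, inv_inv]
        · simp only [hfdef, if_neg hl, if_pos rfl, eq_self_iff_true, if_true]
          field_simp
  -- main computation
  rw [hSdef] at himg ⊢
  rw [← himg,
    integral_image_eq_integral_abs_det_fderiv_smul volume hT hderiv hinj
      (fun x => (∏ l, x l ^ ((a l : ℝ) / k)) * (max 1 (⨆ l, x l)) ^ (-(D : ℝ) / k) *
        ((1 + ∑ l, x l) ^ (N + 1))⁻¹)]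
  apply setIntegral_congr_fun hT
  intro y hy
  have hy0 : ∀ l, 0 < y l := hy.1
  have hy1 : ∀ l, y l ≤ 1 := hy.2
  have ht : (0:ℝ) < y j := hy0 j
  have habs : |(A y).det| = (y j ^ (N + 1))⁻¹ := by
    rw [hdet y ht, abs_neg, abs_inv, abs_pow, abs_of_pos ht]
  simp only [smul_eq_mul, habs, hfdef]
  -- pointwise identity
  set t := y j with htd
  have ht1 : t ≤ 1 := hy1 j
  have htne : t ≠ 0 := ht.ne'
  set c : Fin N → ℝ := fun l => if l = j then 1 else y l with hc
  have hfc : ∀ l, (if l = j then (y j)⁻¹ else y l * (y j)⁻¹) = c l * t⁻¹ := by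
    intro l; by_cases hl : l = j <;> simp [hc, hl, htd]
  have hsup : (⨆ l, (if l = j then (y j)⁻¹ else y l * (y j)⁻¹)) = t⁻¹ := by
    apply le_antisymm
    · apply ciSup_le
      intro l
      rw [hfc l]
      by_cases hl : l = j
      · simp [hc, hl]
      · simp only [hc, if_neg hl]
        calc y l * t⁻¹ ≤ 1 * t⁻¹ := mul_le_mul_of_nonneg_right (hy1 l) (inv_nonneg.2 ht.le)
          _ = t⁻¹ := one_mul _
    · have := le_ciSup (Set.Finite.bddAbove (Set.finite_range
        (fun l => (if l = j then (y j)⁻¹ else y l * (y j)⁻¹)))) j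
      simpa using this
  have hmax : max 1 (t⁻¹ : ℝ) = t⁻¹ := max_eq_right ((one_le_inv₀ ht).2 ht1)
  have hmaxpow : (t⁻¹ : ℝ) ^ (-(D : ℝ) / k) = t ^ ((D : ℝ) / k) := by
    rw [Real.inv_rpow ht.le, neg_div, Real.rpow_neg ht.le, inv_inv]
  have hE : ∑ l ∈ Finset.univ.erase j, y l = (∑ l, y l) - t := by
    rw [← Finset.add_sum_erase _ y (Finset.mem_univ j)]; ring
  have hsum : (1 + ∑ l, (if l = j then (y j)⁻¹ else y l * (y j)⁻¹))
      = (1 + ∑ l, y l) * t⁻¹ := by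
    have h1 : ∑ l, (if l = j then (y j)⁻¹ else y l * (y j)⁻¹) = (∑ l, c l) * t⁻¹ := by
      rw [Finset.sum_mul]; exact Finset.sum_congr rfl fun l _ => hfc l
    have h2 : ∑ l, c l = 1 + ((∑ l, y l) - t) := by
      rw [← Finset.add_sum_erase _ c (Finset.mem_univ j), ← hE, hc]
      simp only [if_pos rfl]
      congr 1
      exact Finset.sum_congr rfl fun l hl => by rw [if_neg (Finset.mem_erase.1 hl).1]
    rw [h1, h2]
    field_simp
    ring
  set u : ℝ := ((∑ l', a l' : ℕ) : ℝ) / k with hu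
  set w : ℝ := (((D - ∑ l', a l' : ℕ) : ℕ) : ℝ) / k with hwd
  have hprod : ∏ l, ((if l = j then (y j)⁻¹ else y l * (y j)⁻¹)) ^ ((a l : ℝ) / k)
      = (∏ l ∈ Finset.univ.erase j, y l ^ ((a l : ℝ) / k)) * (t ^ u)⁻¹ := by
    have h1 : ∀ l, ((if l = j then (y j)⁻¹ else y l * (y j)⁻¹)) ^ ((a l : ℝ) / k)
        = c l ^ ((a l : ℝ) / k) * (t ^ ((a l : ℝ) / k))⁻¹ := by
      intro l
      have hcn : 0 ≤ c l := by
        by_cases hl : l = j <;> simp [hc, hl, (hy0 l).le]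
      rw [hfc l, Real.mul_rpow hcn (inv_nonneg.2 ht.le), Real.inv_rpow ht.le]
    rw [Finset.prod_congr rfl (fun l _ => h1 l), Finset.prod_mul_distrib]
    congr 1
    · rw [← Finset.mul_prod_erase _ _ (Finset.mem_univ j)]
      simp only [hc, if_pos rfl, Real.one_rpow, one_mul]
      exact Finset.prod_congr rfl fun l hl => by rw [if_neg (Finset.mem_erase.1 hl).1]
    · rw [Finset.prod_inv_distrib, ← Real.rpow_sum_of_pos ht]
      congr 1
      rw [hu, ← Finset.sum_div]
      push_cast
      ring
  have hR : ∏ l, y l ^ (((if l = j then D - ∑ l', a l' else a l : ℕ) : ℝ) / k)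
      = t ^ w * ∏ l ∈ Finset.univ.erase j, y l ^ ((a l : ℝ) / k) := by
    rw [← Finset.mul_prod_erase _ _ (Finset.mem_univ j)]
    have hj : y j ^ (((if j = j then D - ∑ l', a l' else a j : ℕ) : ℝ) / k) = t ^ w := by
      rw [if_pos rfl]
    rw [hj]
    congr 1
    exact Finset.prod_congr rfl fun l hl => by rw [if_neg (Finset.mem_erase.1 hl).1]
  have hsplit : t ^ ((D : ℝ) / k) = t ^ w * t ^ u := by
    rw [← Real.rpow_add ht]
    congr 1
    rw [hwd, hu, ← add_div, Nat.cast_sub ha, sub_add_cancel]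
  have hBpos : (0:ℝ) < 1 + ∑ l, y l := by
    have : 0 ≤ ∑ l, y l := Finset.sum_nonneg fun l _ => (hy0 l).le
    linarith
  rw [hprod, hsup, hmax, hmaxpow, hsum, hR, hsplit]
  have h1 : ((1 + ∑ l, y l) ^ (N + 1) : ℝ) ≠ 0 := pow_ne_zero _ hBpos.ne'
  have h2 : (t ^ (N + 1) : ℝ) ≠ 0 := pow_ne_zero _ htne
  have h3 : (t ^ u : ℝ) ≠ 0 := (Real.rpow_pos_of_pos ht u).ne'
  rw [mul_pow]
  generalize ∏ l ∈ Finset.univ.erase j, y l ^ ((a l : ℝ) / k) = P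
  field_simp
  rw [div_pow, one_pow]; field_simp
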